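/- arXiv:1611.06469 — 4 statements merged into one kernel-verified Lean document; each statement's English description precedes it below -/
import Mathlib

section
/- Let ε>0 and set ε₁ = 3ε + 2(2ε)^{1/2}(1+ε)^{1/2}. Let H₀, H₁ be orthogonal closed subspaces of a Hilbert space with H = H₀ ⊕ H₁. Suppose (f_j)_{j∈J} ⊂ H is a Bessel sequence with bound 1+ε and (P_{H₁}f_j)_{j∈J} has lower frame bound 1−ε on H₁, and suppose there exists a family (h_i)_{i∈I} ⊂ H such that (h_i)_{i∈I} ∪ (f_j)_{j∈J} is a (1+ε)-tight frame for H. Then (P_{H₀}h_i)_{i∈I} ∪ (f_j)_{j∈J} is a frame for H with lower frame bound 1−ε₁ and upper frame bound 1+ε₁. -/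
/-!
Write `x = x₀ + x₁` with `x₀ ∈ H₀`, `x₁ ∈ H₁`, and put `q y = ∑ᵢ |⟪y, hᵢ⟫|²`. Since `P_{H₀}` is
self-adjoint, the `i`-sum of the new frame at `x` is `q x₀`, and tightness turns the `j`-sum into
`(1 + ε)‖x‖² - q x`. Along the line `x₀ + t x₁` the form `q` is a quadratic polynomial in `t` with
cross term `G`, so the frame sum at `x` equals `(1 + ε)‖x‖² - q x₁ - 2G`. Tightness gives
`q x₀ ≤ (1 + ε)‖x₀‖²`, the lower bound of `(P_{H₁} f_j)` gives `q x₁ ≤ 2ε‖x₁‖²`, and since `q ≥ 0`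
the discriminant of the quadratic bounds `G² ≤ q x₀ · q x₁`.

As `∑'` is `0` on non-summable families, the expansion of `q` needs care: the vectors at which
`h`, resp. `f`, has square-summable coefficients form two submodules covering the space (a vector in
neither has both sums `0`, hence is `0` by tightness), so one of them is everything.
-/

open scoped InnerProductSpace

section Sequences

variable {ι : Type*}

theorem memℓp_two_iff_summable_sq {E : ι → Type*} [∀ i, NormedAddCommGroup (E i)]
    {a : ∀ i, E i} : Memℓp a 2 ↔ Summable fun i => ‖a i‖ ^ 2 := by
  rw [memℓp_gen_iff (by norm_num)]
  norm_num

theorem lp.norm_sq_eq_tsum {E : ι → Type*} [∀ i, NormedAddCommGroup (E i)] (a : lp E 2) :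
    ‖a‖ ^ 2 = ∑' i, ‖a i‖ ^ 2 := by
  simpa using lp.norm_rpow_eq_tsum (p := 2) (by norm_num) a

theorem exists_tsum_norm_add_ofReal_mul_sq {a b : ι → ℂ} (ha : Memℓp a 2) (hb : Memℓp b 2) :
    ∃ G : ℝ, ∀ t : ℝ, ∑' i, ‖a i + t * b i‖ ^ 2 =
      ∑' i, ‖a i‖ ^ 2 + t ^ 2 * ∑' i, ‖b i‖ ^ 2 + 2 * t * G := by
  let A : lp (fun _ : ι => ℂ) 2 := ⟨a, ha⟩
  let B : lp (fun _ : ι => ℂ) 2 := ⟨b, hb⟩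
  refine ⟨RCLike.re ⟪A, B⟫_ℂ, fun t => ?_⟩
  calc ∑' i, ‖a i + t * b i‖ ^ 2 = ‖A + (t : ℂ) • B‖ ^ 2 :=
      (lp.norm_sq_eq_tsum (A + (t : ℂ) • B)).symm
    _ = ‖A‖ ^ 2 + t ^ 2 * ‖B‖ ^ 2 + 2 * t * RCLike.re ⟪A, B⟫_ℂ := by
      rw [norm_add_sq (𝕜 := ℂ), inner_smul_right, norm_smul]
      simp [mul_pow]
      ring
    _ = _ := by rw [lp.norm_sq_eq_tsum A, lp.norm_sq_eq_tsum B]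

end Sequences

theorem sq_le_mul_of_forall_nonneg {P R G : ℝ} (h : ∀ t : ℝ, 0 ≤ P + t ^ 2 * R + 2 * t * G) :
    G ^ 2 ≤ P * R := by
  have := discrim_le_zero (a := R) (b := 2 * G) (c := P) fun t => by linarith [h t]
  rw [discrim] at this
  linarith

theorem frame_bounds_of_cross_term {ε a b P R G : ℝ} (hε : 0 ≤ ε) (hP : P ≤ (1 + ε) * a ^ 2)
    (hR : 0 ≤ R) (hRb : R ≤ 2 * ε * b ^ 2) (hG : G ^ 2 ≤ P * R) :
    (1 - (3 * ε + 2 * √(2 * ε) * √(1 + ε))) * (a ^ 2 + b ^ 2) ≤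
        (1 + ε) * (a ^ 2 + b ^ 2) - R - 2 * G ∧
      (1 + ε) * (a ^ 2 + b ^ 2) - R - 2 * G ≤
        (1 + (3 * ε + 2 * √(2 * ε) * √(1 + ε))) * (a ^ 2 + b ^ 2) := by
  set s := √(2 * ε) * √(1 + ε)
  have hs : 0 ≤ s := by positivity
  have hs2 : s ^ 2 = 2 * ε * (1 + ε) := by
    rw [mul_pow, Real.sq_sqrt (by linarith), Real.sq_sqrt (by linarith)]
  have hGab : |G| ≤ s * (|a| * |b|) := by
    apply abs_le_of_sq_le_sq _ (by positivity)
    calc G ^ 2 ≤ P * R := hG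
      _ ≤ (1 + ε) * a ^ 2 * (2 * ε * b ^ 2) := mul_le_mul hP hRb hR (by positivity)
      _ = (s * (|a| * |b|)) ^ 2 := by rw [mul_pow, hs2, mul_pow, sq_abs, sq_abs]; ring
  have hN : 0 ≤ a ^ 2 + b ^ 2 := by positivity
  have h2G : 2 * |G| ≤ s * (a ^ 2 + b ^ 2) := by
    nlinarith [sq_nonneg (|a| - |b|), sq_abs a, sq_abs b]
  have hRN : R ≤ 2 * ε * (a ^ 2 + b ^ 2) := by nlinarith
  constructor <;> nlinarith [le_abs_self G, neg_abs_le G, mul_nonneg hε hN, mul_nonneg hs hN]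

theorem Submodule.eq_top_or_eq_top_of_forall_mem_or_mem {R M : Type*} [Ring R] [AddCommGroup M]
    [Module R M] {p q : Submodule R M} (h : ∀ x, x ∈ p ∨ x ∈ q) : p = ⊤ ∨ q = ⊤ := by
  by_contra! hne
  obtain ⟨x, -, hxp⟩ := SetLike.exists_of_lt (lt_top_iff_ne_top.2 hne.1)
  obtain ⟨y, -, hyq⟩ := SetLike.exists_of_lt (lt_top_iff_ne_top.2 hne.2)
  have hxq := (h x).resolve_left hxp
  have hyp := (h y).resolve_right hyq
  rcases h (x + y) with hp | hq
  · exact hxp (by simpa using p.sub_mem hp hyp)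
  · exact hyq (by simpa using q.sub_mem hq hxq)

theorem Submodule.eq_orthogonal_of_isOrtho_of_sup_eq_top {𝕜 E : Type*} [RCLike 𝕜]
    [NormedAddCommGroup E] [InnerProductSpace 𝕜 E] {K L : Submodule 𝕜 E}
    (hKL : K ⟂ L) (hsup : K ⊔ L = ⊤) : L = Kᗮ :=
  eq_of_le_of_inf_le_of_sup_le hKL.symm (by rw [inf_comm, K.inf_orthogonal_eq_bot]; exact bot_le)
    (by rw [sup_comm L, hsup]; exact le_top)

section FrameCoefficients

variable {H : Type*} [NormedAddCommGroup H] [InnerProductSpace ℂ H] {ι I J : Type*}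

def squareSummableSubmodule (g : ι → H) : Submodule ℂ H where
  carrier := {x | Memℓp (fun i => ⟪x, g i⟫_ℂ) 2}
  add_mem' hx hy := by
    simp only [Set.mem_ofPred_eq, inner_add_left]
    exact hx.add hy
  zero_mem' := by
    simp only [Set.mem_ofPred_eq, inner_zero_left]
    exact zero_memℓp
  smul_mem' c _ hx := by
    simp only [Set.mem_ofPred_eq, inner_smul_left]
    exact hx.const_smul (starRingEnd ℂ c)

theorem tsum_norm_inner_sq_eq_zero_of_notMem {g : ι → H} {x : H}
    (hx : x ∉ squareSummableSubmodule g) : ∑' i, ‖⟪x, g i⟫_ℂ‖ ^ 2 = 0 :=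
  tsum_eq_zero_of_not_summable (mt memℓp_two_iff_summable_sq.mpr hx)

theorem exists_tsum_norm_inner_add_ofReal_smul_sq {g : ι → H} {u v : H}
    (hu : u ∈ squareSummableSubmodule g) (hv : v ∈ squareSummableSubmodule g) :
    ∃ G : ℝ, ∀ t : ℝ, ∑' i, ‖⟪u + (t : ℂ) • v, g i⟫_ℂ‖ ^ 2 =
      ∑' i, ‖⟪u, g i⟫_ℂ‖ ^ 2 + t ^ 2 * ∑' i, ‖⟪v, g i⟫_ℂ‖ ^ 2 + 2 * t * G := by
  simpa only [inner_add_left, inner_smul_left, Complex.conj_ofReal]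
    using exists_tsum_norm_add_ofReal_mul_sq hu hv

variable {C : ℝ} {h : I → H} {f : J → H}

theorem squareSummableSubmodule_eq_top_or_eq_top_of_tight (hC : 0 < C)
    (htight : ∀ x : H, ∑' i, ‖⟪x, h i⟫_ℂ‖ ^ 2 + ∑' j, ‖⟪x, f j⟫_ℂ‖ ^ 2 = C * ‖x‖ ^ 2) :
    squareSummableSubmodule h = ⊤ ∨ squareSummableSubmodule f = ⊤ := by
  refine Submodule.eq_top_or_eq_top_of_forall_mem_or_mem fun x => ?_
  by_contra! hx
  have hx0 := htight x
  rw [tsum_norm_inner_sq_eq_zero_of_notMem hx.1, tsum_norm_inner_sq_eq_zero_of_notMem hx.2] at hx0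
  have : x = 0 := by simpa [hC.ne'] using hx0.symm
  exact hx.1 (this ▸ Submodule.zero_mem _)

-- If only `f` has square-summable coefficients everywhere, the expansion for `h` is read off
-- from `∑ᵢ |⟪y, hᵢ⟫|² = C‖y‖² - ∑ⱼ |⟪y, fⱼ⟫|²`, using `u ⟂ v` for the norm term.
theorem exists_tsum_norm_inner_add_ofReal_smul_sq_of_tight (hC : 0 < C)
    (htight : ∀ x : H, ∑' i, ‖⟪x, h i⟫_ℂ‖ ^ 2 + ∑' j, ‖⟪x, f j⟫_ℂ‖ ^ 2 = C * ‖x‖ ^ 2)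
    {u v : H} (huv : ⟪u, v⟫_ℂ = 0) :
    ∃ G : ℝ, ∀ t : ℝ, ∑' i, ‖⟪u + (t : ℂ) • v, h i⟫_ℂ‖ ^ 2 =
      ∑' i, ‖⟪u, h i⟫_ℂ‖ ^ 2 + t ^ 2 * ∑' i, ‖⟪v, h i⟫_ℂ‖ ^ 2 + 2 * t * G := by
  rcases squareSummableSubmodule_eq_top_or_eq_top_of_tight hC htight with hh | hf
  · exact exists_tsum_norm_inner_add_ofReal_smul_sq (hh ▸ trivial) (hh ▸ trivial)
  · obtain ⟨G, hG⟩ := exists_tsum_norm_inner_add_ofReal_smul_sq (g := f) (u := u) (v := v)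
      (hf ▸ trivial) (hf ▸ trivial)
    refine ⟨-G, fun t => ?_⟩
    have hnorm : ‖u + (t : ℂ) • v‖ ^ 2 = ‖u‖ ^ 2 + t ^ 2 * ‖v‖ ^ 2 := by
      rw [norm_add_sq (𝕜 := ℂ), inner_smul_right, huv, norm_smul]
      simp [mul_pow]
    linear_combination htight (u + (t : ℂ) • v) - htight u - t ^ 2 * htight v - hG t + C * hnorm

theorem frame_bounds_of_tight_of_inner_eq_zero {ε : ℝ} (hε : 0 ≤ ε)
    (htight : ∀ x : H, ∑' i, ‖⟪x, h i⟫_ℂ‖ ^ 2 + ∑' j, ‖⟪x, f j⟫_ℂ‖ ^ 2 = (1 + ε) * ‖x‖ ^ 2)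
    {u v : H} (huv : ⟪u, v⟫_ℂ = 0) (hv : (1 - ε) * ‖v‖ ^ 2 ≤ ∑' j, ‖⟪v, f j⟫_ℂ‖ ^ 2) :
    (1 - (3 * ε + 2 * √(2 * ε) * √(1 + ε))) * (‖u‖ ^ 2 + ‖v‖ ^ 2) ≤
        ∑' i, ‖⟪u, h i⟫_ℂ‖ ^ 2 + ∑' j, ‖⟪u + v, f j⟫_ℂ‖ ^ 2 ∧
      ∑' i, ‖⟪u, h i⟫_ℂ‖ ^ 2 + ∑' j, ‖⟪u + v, f j⟫_ℂ‖ ^ 2 ≤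
        (1 + (3 * ε + 2 * √(2 * ε) * √(1 + ε))) * (‖u‖ ^ 2 + ‖v‖ ^ 2) := by
  obtain ⟨G, hG⟩ := exists_tsum_norm_inner_add_ofReal_smul_sq_of_tight (by linarith) htight huv
  have hGsq := sq_le_mul_of_forall_nonneg fun t => (hG t).symm ▸ tsum_nonneg fun i => by positivity
  have hsplit := hG 1
  rw [Complex.ofReal_one, one_smul, one_pow, one_mul, mul_one] at hsplit
  have hnorm : ‖u + v‖ ^ 2 = ‖u‖ ^ 2 + ‖v‖ ^ 2 := by simpa [huv] using norm_add_sq (𝕜 := ℂ) u v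
  have htight_u := htight u
  have htight_v := htight v
  have htight_uv := htight (u + v)
  rw [hnorm] at htight_uv
  have hfu : 0 ≤ ∑' j, ‖⟪u, f j⟫_ℂ‖ ^ 2 := tsum_nonneg fun j => by positivity
  have hhv : 0 ≤ ∑' i, ‖⟪v, h i⟫_ℂ‖ ^ 2 := tsum_nonneg fun i => by positivity
  have hbounds := frame_bounds_of_cross_term (a := ‖u‖) (b := ‖v‖) hε (by linarith) hhv
    (by linarith) hGsq
  constructor <;> linarith [hbounds.1, hbounds.2]

end FrameCoefficients

theorem stmt7_general {H : Type*} [NormedAddCommGroup H] [InnerProductSpace ℂ H]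
    (ε : ℝ) (hε : 0 < ε)
    (H₀ H₁ : Submodule ℂ H) [Submodule.HasOrthogonalProjection H₀] [Submodule.HasOrthogonalProjection H₁]
    (horth : ∀ x ∈ H₀, ∀ y ∈ H₁, ⟪x, y⟫_ℂ = 0) (hsum : H₀ ⊔ H₁ = ⊤)
    {J : Type*} (f : J → H)
    (hlower : ∀ y ∈ H₁, (1 - ε) * ‖y‖ ^ 2 ≤
      ∑' j, ‖⟪y, (Submodule.orthogonalProjectionOnto H₁ (f j) : H)⟫_ℂ‖ ^ 2)
    {I : Type*} (h : I → H)
    (htight : ∀ x : H,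
      (∑' i, ‖⟪x, h i⟫_ℂ‖ ^ 2) + ∑' j, ‖⟪x, f j⟫_ℂ‖ ^ 2 = (1 + ε) * ‖x‖ ^ 2) :
    ∀ x : H,
      ((1 - (3 * ε + 2 * Real.sqrt (2 * ε) * Real.sqrt (1 + ε))) * ‖x‖ ^ 2 ≤
        (∑' i, ‖⟪x, (Submodule.orthogonalProjectionOnto H₀ (h i) : H)⟫_ℂ‖ ^ 2) +
          ∑' j, ‖⟪x, f j⟫_ℂ‖ ^ 2) ∧
      ((∑' i, ‖⟪x, (Submodule.orthogonalProjectionOnto H₀ (h i) : H)⟫_ℂ‖ ^ 2) +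
          ∑' j, ‖⟪x, f j⟫_ℂ‖ ^ 2 ≤
        (1 + (3 * ε + 2 * Real.sqrt (2 * ε) * Real.sqrt (1 + ε))) * ‖x‖ ^ 2) := by
  obtain rfl : H₁ = H₀ᗮ :=
    Submodule.eq_orthogonal_of_isOrtho_of_sup_eq_top (Submodule.isOrtho_iff_inner_eq.mpr horth) hsum
  intro x
  set x₀ := H₀.starProjection x
  set x₁ := x - x₀
  have hx₁ : x₁ ∈ H₀ᗮ := H₀.sub_starProjection_mem_orthogonal x
  have hperp : ⟪x₀, x₁⟫_ℂ = 0 :=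
    Submodule.inner_right_of_mem_orthogonal (H₀.starProjection_apply_mem x) hx₁
  have hdecomp : x₀ + x₁ = x := add_sub_cancel x₀ x
  have hnorm : ‖x‖ ^ 2 = ‖x₀‖ ^ 2 + ‖x₁‖ ^ 2 := by
    simpa [hperp, hdecomp] using norm_add_sq (𝕜 := ℂ) x₀ x₁
  have hproj : ∀ i, ⟪x, (H₀.orthogonalProjectionOnto (h i) : H)⟫_ℂ = ⟪x₀, h i⟫_ℂ := fun i => by
    rw [Submodule.coe_orthogonalProjectionOnto_apply, Submodule.inner_starProjection_left_eq_right]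
  have hcoef : ∀ j, ⟪x₁, (H₀ᗮ.orthogonalProjectionOnto (f j) : H)⟫_ℂ = ⟪x₁, f j⟫_ℂ := fun j =>
    Submodule.inner_orthogonalProjectionOnto_eq_of_mem_left ⟨x₁, hx₁⟩ (f j)
  have hbounds := frame_bounds_of_tight_of_inner_eq_zero hε.le htight hperp
    (by simpa only [hcoef] using hlower x₁ hx₁)
  simpa only [hproj, hnorm, hdecomp] using hbounds

theorem stmt7 {H : Type*} [NormedAddCommGroup H] [InnerProductSpace ℂ H]
    (ε : ℝ) (hε : 0 < ε)
    (H₀ H₁ : Submodule ℂ H) [Submodule.HasOrthogonalProjection H₀] [Submodule.HasOrthogonalProjection H₁]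
    (horth : ∀ x ∈ H₀, ∀ y ∈ H₁, ⟪x, y⟫_ℂ = 0) (hsum : H₀ ⊔ H₁ = ⊤)
    {J : Type*} (f : J → H)
    (hBessel : ∀ x : H, ∑' j, ‖⟪x, f j⟫_ℂ‖ ^ 2 ≤ (1 + ε) * ‖x‖ ^ 2)
    (hlower : ∀ y ∈ H₁, (1 - ε) * ‖y‖ ^ 2 ≤
      ∑' j, ‖⟪y, (Submodule.orthogonalProjectionOnto H₁ (f j) : H)⟫_ℂ‖ ^ 2)
    {I : Type*} (h : I → H)
    (htight : ∀ x : H,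
      (∑' i, ‖⟪x, h i⟫_ℂ‖ ^ 2) + ∑' j, ‖⟪x, f j⟫_ℂ‖ ^ 2 = (1 + ε) * ‖x‖ ^ 2) :
    ∀ x : H,
      ((1 - (3 * ε + 2 * Real.sqrt (2 * ε) * Real.sqrt (1 + ε))) * ‖x‖ ^ 2 ≤
        (∑' i, ‖⟪x, (Submodule.orthogonalProjectionOnto H₀ (h i) : H)⟫_ℂ‖ ^ 2) +
          ∑' j, ‖⟪x, f j⟫_ℂ‖ ^ 2) ∧
      ((∑' i, ‖⟪x, (Submodule.orthogonalProjectionOnto H₀ (h i) : H)⟫_ℂ‖ ^ 2) +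
          ∑' j, ‖⟪x, f j⟫_ℂ‖ ^ 2 ≤
        (1 + (3 * ε + 2 * Real.sqrt (2 * ε) * Real.sqrt (1 + ε))) * ‖x‖ ^ 2) :=
  stmt7_general ε hε H₀ H₁ horth hsum f hlower h htight
end

section
/- Let Ψ: X → H be a continuous Bessel map from a σ-finite measure space (X,Σ,μ) to a separable Hilbert space H. Then for all ε>0 there exist a countable measurable partition (X_j)_{j∈J} of X and points t_j ∈ X_j such that ‖Ψ(t) − Ψ(t_j)‖ < ε for all t ∈ X_j and ∫ ‖Ψ(t) − Σ_{j∈J} Ψ(t_j) 1_{X_j}(t)‖ dμ(t) < ε. -/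
/-!
Cut `X` into the pieces `A n = disjointed (spanningSets μ) n` of finite measure and choose radii
`0 < δ n ≤ ε` with `∑ δ n μ(A n) < ε`. By separability, each `A n` splits into countably many
measurable pieces on which `Ψ` oscillates less than `δ n`: intersect with preimages of balls
of radius `δ n / 2` around a dense sequence. Picking a point in every nonempty piece gives a step
function within `δ n` of `Ψ` on `A n`, so its distance to `Ψ` has integral below `ε`.
-/

open MeasureTheory Set TopologicalSpace Function
open scoped ENNReal InnerProductSpace

theorem tsum_indicator_const_apply_of_mem {ι α M : Type*} [AddCommMonoid M] [TopologicalSpace M]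
    {s : ι → Set α} (hs : Pairwise (Disjoint on s)) (v : ι → M) {i : ι} {x : α} (hx : x ∈ s i) :
    ∑' j, (s j).indicator (fun _ => v j) x = v i := by
  rw [tsum_eq_single i fun j hj => indicator_of_notMem (disjoint_right.1 (hs hj) hx) _]
  exact indicator_of_mem hx _

theorem integral_norm_lt_of_lintegral_lt {X E : Type*} [MeasurableSpace X] {μ : Measure X}
    [NormedAddCommGroup E] {G : X → E} {h : X → ℝ≥0∞} (hGh : ∀ s, ENNReal.ofReal ‖G s‖ ≤ h s)
    {ε : ℝ} (hh : ∫⁻ s, h s ∂μ < ENNReal.ofReal ε) : ∫ s, ‖G s‖ ∂μ < ε :=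
  calc ∫ s, ‖G s‖ ∂μ ≤ ‖∫ s, ‖G s‖ ∂μ‖ := Real.le_norm_self _
    _ ≤ (∫⁻ s, ENNReal.ofReal ‖‖G s‖‖ ∂μ).toReal := norm_integral_le_lintegral_norm _
    _ < ε := by
      simp_rw [norm_norm]
      exact ENNReal.toReal_lt_of_lt_ofReal ((lintegral_mono hGh).trans_lt hh)

theorem lintegral_tsum_indicator_const {X ι : Type*} [MeasurableSpace X] {μ : Measure X}
    [Countable ι] {A : ι → Set X} (hA : ∀ n, MeasurableSet (A n)) (w : ι → ℝ≥0∞) :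
    ∫⁻ x, ∑' n, (A n).indicator (fun _ => w n) x ∂μ = ∑' n, w n * μ (A n) := by
  rw [lintegral_tsum fun n => aemeasurable_const.indicator (hA n)]
  simp_rw [lintegral_indicator_const (hA _)]

section Partition

variable {X E : Type*} [MeasurableSpace X] [PseudoMetricSpace E] [SeparableSpace E]
  [MeasurableSpace E] [OpensMeasurableSpace E] {f : X → E}

theorem exists_measurable_partition_dist_lt (hf : Measurable f) {δ : ℝ} (hδ : 0 < δ) :
    ∃ P : ℕ → Set X, (∀ m, MeasurableSet (P m)) ∧ Pairwise (Disjoint on P) ∧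
      (⋃ m, P m) = univ ∧ ∀ m, ∀ s ∈ P m, ∀ s' ∈ P m, dist (f s) (f s') < δ := by
  rcases isEmpty_or_nonempty E with hE | hE
  · have : IsEmpty X := f.isEmpty
    exact ⟨fun _ => ∅, fun _ => .empty, fun _ _ _ => disjoint_empty _,
      eq_univ_of_forall isEmptyElim, fun _ _ h => h.elim⟩
  obtain ⟨D, hD⟩ := exists_dense_seq E
  set U : ℕ → Set X := fun m => f ⁻¹' Metric.ball (D m) (δ / 2)
  refine ⟨disjointed U, .disjointed fun m => hf measurableSet_ball, disjoint_disjointed U, ?_,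
    fun m s hs s' hs' => ?_⟩
  · rw [iUnion_disjointed]
    refine eq_univ_of_forall fun s => mem_iUnion.2 ?_
    obtain ⟨m, hm⟩ := hD.exists_dist_lt (f s) (half_pos hδ)
    exact ⟨m, Metric.mem_ball.2 hm⟩
  · have hs : dist (f s) (D m) < δ / 2 := disjointed_subset U m hs
    have hs' : dist (f s') (D m) < δ / 2 := disjointed_subset U m hs'
    linarith [dist_triangle_right (f s) (f s') (D m)]

theorem exists_measurable_pointed_partition_dist_lt (hf : Measurable f) {A : ℕ → Set X}
    (hA : ∀ n, MeasurableSet (A n)) (hAd : Pairwise (Disjoint on A)) (hAU : (⋃ n, A n) = univ)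
    {δ : ℕ → ℝ} (hδ : ∀ n, 0 < δ n) :
    ∃ (J : Type) (_ : Countable J) (Xs : J → Set X) (t : J → X),
      (∀ j, MeasurableSet (Xs j)) ∧ Pairwise (fun i j => Disjoint (Xs i) (Xs j)) ∧
      (⋃ j, Xs j) = univ ∧ (∀ j, t j ∈ Xs j) ∧
      ∀ j, ∃ n, Xs j ⊆ A n ∧ ∀ s ∈ Xs j, dist (f s) (f (t j)) < δ n := by
  choose P hPm hPd hPU hPdist using fun n => exists_measurable_partition_dist_lt hf (hδ n)
  set C : ℕ × ℕ → Set X := fun p => A p.1 ∩ P p.1 p.2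
  have hCd : Pairwise (Disjoint on C) := by
    rintro ⟨n, m⟩ ⟨n', m'⟩ hne
    rcases eq_or_ne n n' with rfl | hn
    · exact (hPd n fun hm => hne (Prod.ext rfl hm)).mono inter_subset_right inter_subset_right
    · exact (hAd hn).mono inter_subset_left inter_subset_left
  refine ⟨{p // (C p).Nonempty}, inferInstance, fun j => C j.1, fun j => j.2.some,
    fun j => (hA _).inter (hPm _ _), fun i j hij => hCd (Subtype.coe_ne_coe.2 hij), ?_,
    fun j => j.2.some_mem, fun j => ⟨j.1.1, inter_subset_left, fun s hs =>
      hPdist _ _ s hs.2 _ j.2.some_mem.2⟩⟩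
  refine eq_univ_of_forall fun s => ?_
  obtain ⟨n, hn⟩ := mem_iUnion.1 (hAU ▸ mem_univ s)
  obtain ⟨m, hm⟩ := mem_iUnion.1 (hPU n ▸ mem_univ s)
  exact mem_iUnion.2 ⟨⟨(n, m), s, hn, hm⟩, hn, hm⟩

end Partition

theorem stmt10_general {X : Type*} [MeasurableSpace X] (μ : Measure X) [SigmaFinite μ]
    {H : Type*} [NormedAddCommGroup H]
    [TopologicalSpace.SeparableSpace H] [MeasurableSpace H] [BorelSpace H]
    (Ψ : X → H) (hmeas : Measurable Ψ)
    (ε : ℝ) (hε : 0 < ε) :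
    ∃ (J : Type) (_ : Countable J) (Xs : J → Set X) (t : J → X),
      (∀ j, MeasurableSet (Xs j)) ∧
      Pairwise (fun i j => Disjoint (Xs i) (Xs j)) ∧
      (⋃ j, Xs j) = Set.univ ∧
      (∀ j, t j ∈ Xs j) ∧
      (∀ j, ∀ s ∈ Xs j, ‖Ψ s - Ψ (t j)‖ < ε) ∧
      (∫ s, ‖Ψ s - ∑' j, (Xs j).indicator (fun _ => Ψ (t j)) s‖ ∂μ) < ε := by
  set A := disjointed (spanningSets μ)
  have hAm : ∀ n, MeasurableSet (A n) := .disjointed (measurableSet_spanningSets μ)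
  have hAd : Pairwise (Disjoint on A) := disjoint_disjointed _
  have hAfin : ∀ n, μ (A n) ≠ ∞ := fun n =>
    (measure_mono (disjointed_subset _ n)).trans_lt (measure_spanningSets_lt_top μ n) |>.ne
  obtain ⟨δ, hδpos, hδsum⟩ :=
    ENNReal.exists_pos_tsum_mul_lt_of_countable (ENNReal.ofReal_pos.2 hε).ne' _ hAfin
  set r : ℕ → ℝ := fun n => min (δ n) ε
  obtain ⟨J, hJ, Xs, t, hXm, hXd, hXU, ht, hXA⟩ :=
    exists_measurable_pointed_partition_dist_lt hmeas hAm hAd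
    (by rw [iUnion_disjointed, iUnion_spanningSets]) (δ := r) fun n => lt_min (hδpos n) hε
  choose N hXN hNdist using hXA
  refine ⟨J, hJ, Xs, t, hXm, hXd, hXU, ht, fun j s hs => ?_, ?_⟩
  · rw [← dist_eq_norm]
    exact (hNdist j s hs).trans_le (min_le_right _ _)
  refine integral_norm_lt_of_lintegral_lt (h := fun s => ∑' n, (A n).indicator
    (fun _ => ENNReal.ofReal (r n)) s) (fun s => ?_) ?_
  · obtain ⟨j, hj⟩ := mem_iUnion.1 (hXU ▸ mem_univ s)
    rw [tsum_indicator_const_apply_of_mem hXd _ hj, ← dist_eq_norm,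
      tsum_indicator_const_apply_of_mem hAd _ (hXN j hj)]
    exact ENNReal.ofReal_le_ofReal (hNdist j s hj).le
  · rw [lintegral_tsum_indicator_const hAm]
    refine lt_of_le_of_lt (ENNReal.tsum_le_tsum fun n => ?_) hδsum
    rw [mul_comm]
    gcongr
    exact (ENNReal.ofReal_le_ofReal (min_le_left _ _)).trans_eq ENNReal.ofReal_coe_nnreal

theorem stmt10 {X : Type*} [MeasurableSpace X] (μ : Measure X) [SigmaFinite μ]
    {H : Type*} [NormedAddCommGroup H] [InnerProductSpace ℂ H] [CompleteSpace H]
    [TopologicalSpace.SeparableSpace H] [MeasurableSpace H] [BorelSpace H]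
    (Ψ : X → H) (hmeas : Measurable Ψ) (B : ℝ)
    (hBessel : ∀ x : H, (∫ t, ‖⟪x, Ψ t⟫_ℂ‖ ^ 2 ∂μ) ≤ B * ‖x‖ ^ 2)
    (ε : ℝ) (hε : 0 < ε) :
    ∃ (J : Type) (_ : Countable J) (Xs : J → Set X) (t : J → X),
      (∀ j, MeasurableSet (Xs j)) ∧
      Pairwise (fun i j => Disjoint (Xs i) (Xs j)) ∧
      (⋃ j, Xs j) = Set.univ ∧
      (∀ j, t j ∈ Xs j) ∧
      (∀ j, ∀ s ∈ Xs j, ‖Ψ s - Ψ (t j)‖ < ε) ∧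
      (∫ s, ‖Ψ s - ∑' j, (Xs j).indicator (fun _ => Ψ (t j)) s‖ ∂μ) < ε :=
  stmt10_general μ Ψ hmeas ε hε
end

section
/- For every ε > 0 there exists a finite unit norm tight frame (x_i)_{1≤i≤M} of a finite-dimensional Hilbert space such that for every subset I ⊂ {1,…,M} for which (x_i)_{i∈I} is a basis, the lower Riesz constant of (x_i)_{i∈I} is less than ε. Consequently there is no uniform constant A > 0 such that every finite unit norm tight frame contains a basis with lower Riesz bound at least A. -/
open scoped InnerProductSpace

/-! The harmonic frame: take the `n` characters of `ZMod (n + 1)` of nonzero frequency as the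
orthonormal columns of an `(n + 1) × n` matrix; its rows, rescaled to unit length, form a unit norm
tight frame of `ℂⁿ` with `n + 1` vectors. Each nontrivial character sums to zero, so the frame
vectors sum to zero. A basis among them omits exactly one vector `x j`, and the sum of the others
is `-x j`; testing the lower Riesz inequality with all coefficients `1` gives `c * n ≤ 1`. -/

open Finset

section

variable {𝕜 E : Type*} [RCLike 𝕜] [NormedAddCommGroup E] [InnerProductSpace 𝕜 E]

theorem Orthonormal.norm_sum_smul_sq {κ : Type*} [Fintype κ] {v : κ → E}
    (hv : Orthonormal 𝕜 v) (a : κ → 𝕜) : ‖∑ k, a k • v k‖ ^ 2 = ∑ k, ‖a k‖ ^ 2 := by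
  have h := hv.inner_sum a a univ
  simp_rw [inner_self_eq_norm_sq_to_K, RCLike.conj_mul] at h
  exact_mod_cast h

theorem Orthonormal.sum_norm_inner_rows_sq {ι κ : Type*} [Fintype ι] [Fintype κ]
    {w : κ → EuclideanSpace 𝕜 ι} (hw : Orthonormal 𝕜 w) (y : EuclideanSpace 𝕜 κ) :
    ∑ i, ‖⟪y, WithLp.toLp 2 (fun k => w k i)⟫_𝕜‖ ^ 2 = ‖y‖ ^ 2 := by
  have hinner : ∀ i,
      ⟪y, WithLp.toLp 2 (fun k => w k i)⟫_𝕜 =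
        (∑ k, (starRingEnd 𝕜) (y k) • w k) i := by
    intro i
    simp [PiLp.inner_apply, WithLp.ofLp_sum, mul_comm]
  simp_rw [hinner, ← EuclideanSpace.norm_sq_eq, hw.norm_sum_smul_sq, RCLike.norm_conj,
    EuclideanSpace.norm_sq_eq]

theorem Finset.card_eq_finrank_of_linearIndependent_of_span_eq_top [FiniteDimensional 𝕜 E]
    {ι : Type*} {x : ι → E} {I : Finset ι} (hli : LinearIndependent 𝕜 fun i : I => x i)
    (hspan : Submodule.span 𝕜 (x '' I) = ⊤) : #I = Module.finrank 𝕜 E := by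
  rw [← finrank_top 𝕜 E, ← hspan, show x '' I = Set.range fun i : I => x i by ext; simp,
    finrank_span_eq_card hli, Fintype.card_coe]

theorem lowerRieszBound_mul_finrank_le_one [FiniteDimensional 𝕜 E] {ι : Type*} [Fintype ι]
    {x : ι → E} (hx : ∀ i, ‖x i‖ = 1) (hsum : ∑ i, x i = 0)
    (hcard : Fintype.card ι = Module.finrank 𝕜 E + 1) {I : Finset ι}
    (hli : LinearIndependent 𝕜 fun i : I => x i) (hspan : Submodule.span 𝕜 (x '' I) = ⊤)
    {c : ℝ} (hc : ∀ a : ι → 𝕜, c * ∑ i ∈ I, ‖a i‖ ^ 2 ≤ ‖∑ i ∈ I, a i • x i‖ ^ 2) :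
    c * Module.finrank 𝕜 E ≤ 1 := by
  classical
  have hI := card_eq_finrank_of_linearIndependent_of_span_eq_top hli hspan
  obtain ⟨j, hj⟩ : ∃ j, Iᶜ = {j} := card_eq_one.mp (by rw [card_compl, hI, hcard]; simp)
  have hsumI : ∑ i ∈ I, x i = -x j := by
    rw [eq_neg_iff_add_eq_zero, ← sum_singleton x j, ← hj, sum_add_sum_compl, hsum]
  simpa [hI, hsumI, hx] using hc 1

end

section

variable (N : ℕ) [NeZero N]

noncomputable def dftVec (a : ZMod N) : EuclideanSpace ℂ (ZMod N) :=
  WithLp.toLp 2 fun z => ZMod.stdAddChar (z * a) / (Real.sqrt N : ℂ)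

variable {N}

theorem norm_dftVec_apply (a z : ZMod N) : ‖dftVec N a z‖ = (Real.sqrt N)⁻¹ := by
  simp [dftVec]

theorem orthonormal_dftVec : Orthonormal ℂ (dftVec N) := by
  rw [orthonormal_iff_ite]
  intro a b
  have hN : (N : ℂ) ≠ 0 := NeZero.ne _
  calc ⟪dftVec N a, dftVec N b⟫_ℂ
      = (∑ z, ZMod.stdAddChar (z * (b - a))) / N := by
        simp only [PiLp.inner_apply, dftVec, RCLike.inner_apply, map_div₀, Complex.conj_ofReal,
          ← AddChar.map_neg_eq_conj, sum_div]
        refine sum_congr rfl fun z _ => ?_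
        rw [mul_sub, sub_eq_add_neg, AddChar.map_add_eq_mul, div_mul_div_comm,
          ← Complex.ofReal_mul, Real.mul_self_sqrt (Nat.cast_nonneg _), Complex.ofReal_natCast]
    _ = if a = b then 1 else 0 := by
        simp only [AddChar.sum_mulShift _ (ZMod.isPrimitive_stdAddChar N), ZMod.card, sub_eq_zero,
          eq_comm (a := b)]
        split_ifs <;> simp [hN]

theorem sum_dftVec_apply {a : ZMod N} (ha : a ≠ 0) : ∑ z, dftVec N a z = 0 := by
  simp only [dftVec, ← sum_div, AddChar.sum_mulShift _ (ZMod.isPrimitive_stdAddChar N), if_neg ha,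
    Nat.cast_zero, zero_div]

theorem orthonormal_dftVec_succ (n : ℕ) :
    Orthonormal ℂ fun k : Fin n => dftVec (n + 1) (ZMod.finEquiv (n + 1) k.succ) :=
  orthonormal_dftVec.comp _ ((ZMod.finEquiv (n + 1)).injective.comp (Fin.succ_injective n))

noncomputable def harmonicFrame (n : ℕ) (z : ZMod (n + 1)) : EuclideanSpace ℂ (Fin n) :=
  (Real.sqrt ((n + 1) / n) : ℂ) •
    WithLp.toLp 2 fun k => dftVec (n + 1) (ZMod.finEquiv (n + 1) k.succ) z

theorem sum_norm_inner_harmonicFrame_sq (n : ℕ) (y : EuclideanSpace ℂ (Fin n)) :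
    ∑ z, ‖⟪y, harmonicFrame n z⟫_ℂ‖ ^ 2 = (n + 1) / n * ‖y‖ ^ 2 := by
  simp_rw [harmonicFrame, inner_smul_right, norm_mul, mul_pow, ← mul_sum,
    (orthonormal_dftVec_succ n).sum_norm_inner_rows_sq, Complex.norm_real, Real.norm_eq_abs,
    sq_abs, Real.sq_sqrt (by positivity : (0 : ℝ) ≤ (n + 1) / n)]

theorem norm_harmonicFrame {n : ℕ} (hn : n ≠ 0) (z : ZMod (n + 1)) :
    ‖harmonicFrame n z‖ = 1 := by
  rw [← pow_eq_one_iff_of_nonneg (norm_nonneg _) two_ne_zero]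
  simp_rw [harmonicFrame, norm_smul, mul_pow, EuclideanSpace.norm_sq_eq, norm_dftVec_apply,
    Complex.norm_real, Real.norm_eq_abs, sq_abs, inv_pow, sum_const, card_univ, Fintype.card_fin,
    nsmul_eq_mul]
  rw [Real.sq_sqrt (by positivity), Real.sq_sqrt (by positivity)]
  push_cast
  field_simp

theorem sum_harmonicFrame (n : ℕ) : ∑ z, harmonicFrame n z = 0 := by
  ext k
  simp [harmonicFrame, ← smul_sum, WithLp.ofLp_sum, sum_dftVec_apply, Fin.succ_ne_zero]

end

theorem exists_funtf_forall_basis_lowerRieszBound_lt (ε : ℝ) (hε : 0 < ε) :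
    ∃ (n M : ℕ) (x : Fin M → EuclideanSpace ℂ (Fin n)),
      0 < n ∧ 0 < M ∧ (∀ i, ‖x i‖ = 1) ∧
      (∀ y : EuclideanSpace ℂ (Fin n),
        ∑ i, ‖⟪y, x i⟫_ℂ‖ ^ 2 = ((M : ℝ) / (n : ℝ)) * ‖y‖ ^ 2) ∧
      ∀ I : Finset (Fin M),
        (LinearIndependent ℂ (fun i : I => x i) ∧
          Submodule.span ℂ (x '' (I : Set (Fin M))) = ⊤) →
        ∀ c : ℝ,
          (∀ a : Fin M → ℂ,
            c * ∑ i ∈ I, ‖a i‖ ^ 2 ≤ ‖∑ i ∈ I, a i • x i‖ ^ 2) → c < ε := by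
  obtain ⟨m, hm⟩ := exists_nat_one_div_lt hε
  set n := m + 1
  set e := (ZMod.finEquiv (n + 1)).toEquiv
  have hunit : ∀ i, ‖harmonicFrame n (e i)‖ = 1 :=
    fun i => norm_harmonicFrame m.succ_ne_zero _
  refine ⟨n, n + 1, fun i => harmonicFrame n (e i), m.succ_pos, n.succ_pos, hunit,
    fun y => ?_, ?_⟩
  · rw [e.sum_comp fun z => ‖⟪y, harmonicFrame n z⟫_ℂ‖ ^ 2]
    exact_mod_cast sum_norm_inner_harmonicFrame_sq n y
  · rintro I ⟨hli, hspan⟩ c hc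
    have hsum : ∑ i, harmonicFrame n (e i) = 0 := by rw [e.sum_comp, sum_harmonicFrame]
    have hcn := lowerRieszBound_mul_finrank_le_one hunit hsum (by simp) hli hspan hc
    rw [finrank_euclideanSpace_fin] at hcn
    have hc' : c ≤ 1 / (m + 1) := by rw [le_div_iff₀ (by positivity)]; exact_mod_cast hcn
    linarith

theorem stmt14 :
    (∀ ε : ℝ, 0 < ε →
      ∃ (n M : ℕ) (x : Fin M → EuclideanSpace ℂ (Fin n)),
        0 < n ∧ 0 < M ∧ (∀ i, ‖x i‖ = 1) ∧
        (∀ y : EuclideanSpace ℂ (Fin n),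
          ∑ i, ‖⟪y, x i⟫_ℂ‖ ^ 2 = ((M : ℝ) / (n : ℝ)) * ‖y‖ ^ 2) ∧
        ∀ I : Finset (Fin M),
          (LinearIndependent ℂ (fun i : I => x i) ∧
            Submodule.span ℂ (x '' (I : Set (Fin M))) = ⊤) →
          ∀ c : ℝ,
            (∀ a : Fin M → ℂ,
              c * ∑ i ∈ I, ‖a i‖ ^ 2 ≤ ‖∑ i ∈ I, a i • x i‖ ^ 2) → c < ε) ∧
    ¬ ∃ A : ℝ, 0 < A ∧
      ∀ (n M : ℕ) (x : Fin M → EuclideanSpace ℂ (Fin n)),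
        0 < n → 0 < M → (∀ i, ‖x i‖ = 1) →
        (∀ y : EuclideanSpace ℂ (Fin n),
          ∑ i, ‖⟪y, x i⟫_ℂ‖ ^ 2 = ((M : ℝ) / (n : ℝ)) * ‖y‖ ^ 2) →
        ∃ I : Finset (Fin M),
          (LinearIndependent ℂ (fun i : I => x i) ∧
            Submodule.span ℂ (x '' (I : Set (Fin M))) = ⊤) ∧
          ∀ a : Fin M → ℂ,
            A * ∑ i ∈ I, ‖a i‖ ^ 2 ≤ ‖∑ i ∈ I, a i • x i‖ ^ 2 := by
  refine ⟨exists_funtf_forall_basis_lowerRieszBound_lt, ?_⟩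
  rintro ⟨A, hA, hall⟩
  obtain ⟨n, M, x, hn, hM, hunit, htight, hsmall⟩ :=
    exists_funtf_forall_basis_lowerRieszBound_lt A hA
  obtain ⟨I, hbasis, hA'⟩ := hall n M x hn hM hunit htight
  exact (hsmall I hbasis A hA').false
end

section
/- Let Ψ: X → H be a measurable map on a measurable space (X,Σ) in which all singletons are measurable, and suppose there exist indices (t_j)_{j∈J} ∈ X^J such that (Ψ(t_j))_{j∈J} is a frame of H. Then there exists a positive σ-finite measure ν on (X,Σ) such that Ψ is a continuous frame of H with respect to ν and Ψ is bounded ν-almost everywhere. -/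
/-!
Take for `ν` the sum of the Dirac masses at the sample points `t j` with `Ψ (t j) ≠ 0`. Integrals
against `ν` are then the frame sums, so `Ψ` inherits the frame bounds, and testing the upper
bound against `x = Ψ (t j)` gives `‖Ψ (t j)‖ ≤ √B` at every atom. For `ν` to be σ-finite, each
point `s` may be sampled only finitely often; this holds because the frame sum at `x = Ψ s ≠ 0`
converges and every sample of `s` contributes the same positive term `‖Ψ s‖ ^ 4`.
-/

open scoped InnerProductSpace ENNReal
open MeasureTheory Measure Set

section SumDirac

variable {X ι : Type*} [MeasurableSpace X] [MeasurableSingletonClass X]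

lemma sum_dirac_apply_singleton (t : ι → X) (s : X) :
    (sum fun i => dirac (t i)) {s} = {i | t i = s}.encard := by
  rw [sum_apply _ (measurableSet_singleton s), ← ENNReal.tsum_set_one,
    tsum_subtype (f := fun _ => 1)]
  congr 1 with i
  by_cases h : t i = s <;> simp [h]

lemma sigmaFinite_sum_dirac [Countable ι] {t : ι → X} (hfin : ∀ s, {i | t i = s}.Finite) :
    SigmaFinite (sum fun i => dirac (t i)) := by
  refine sigmaFinite_of_countable (S := insert (range t)ᶜ (range fun i => {t i}))
    ((countable_range _).insert _) ?_ (by simp [sUnion_insert, sUnion_range])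
  rintro _ (rfl | ⟨i, rfl⟩)
  · simp [sum_apply _ (countable_range t).measurableSet.compl]
  · rw [sum_dirac_apply_singleton]
    exact ENat.toENNReal_lt_top.mpr (hfin (t i)).encard_lt_top

variable [Countable ι]

lemma integral_sum_dirac_of_nonneg (t : ι → X) {f : X → ℝ} (hf : ∀ s, 0 ≤ f s) :
    ∫ s, f s ∂(sum fun i => dirac (t i)) = ∑' i, f (t i) := by
  rw [integral_eq_lintegral_of_nonneg_ae (.of_forall hf)
      (aestronglyMeasurable_sum_measure_iff.mpr fun _ => aestronglyMeasurable_dirac),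
    lintegral_sum_measure, ENNReal.tsum_toReal_eq fun _ => by simp [lintegral_dirac]]
  simp [lintegral_dirac, hf]

lemma ae_sum_dirac_iff (t : ι → X) {p : X → Prop} :
    (∀ᵐ s ∂(sum fun i => dirac (t i)), p s) ↔ ∀ i, p (t i) := by
  simp [Filter.Eventually, ae_sum_eq, ae_dirac_eq]

end SumDirac

lemma summable_of_pos_le_tsum {ι : Type*} {f : ι → ℝ} {c : ℝ} (hc : 0 < c)
    (h : c ≤ ∑' i, f i) : Summable f :=
  not_not.mp fun hf => (hc.trans_le h).ne' (tsum_eq_zero_of_not_summable hf)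

section InnerProduct

variable {𝕜 H ι : Type*} [RCLike 𝕜] [NormedAddCommGroup H] [InnerProductSpace 𝕜 H]

lemma norm_sq_le_of_tsum_inner_le {v : ι → H} {B : ℝ} {i : ι} (hv : v i ≠ 0)
    (hsum : Summable fun j => ‖⟪v i, v j⟫_𝕜‖ ^ 2)
    (hB : ∑' j, ‖⟪v i, v j⟫_𝕜‖ ^ 2 ≤ B * ‖v i‖ ^ 2) : ‖v i‖ ^ 2 ≤ B := by
  have hpos : 0 < ‖v i‖ ^ 2 := pow_pos (norm_pos_iff.mpr hv) 2
  have hsq : ‖v i‖ ^ 2 * ‖v i‖ ^ 2 ≤ B * ‖v i‖ ^ 2 := calc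
    _ = ‖⟪v i, v i⟫_𝕜‖ ^ 2 := by rw [inner_self_eq_norm_sq_to_K]; simp; ring
    _ ≤ ∑' j, ‖⟪v i, v j⟫_𝕜‖ ^ 2 := hsum.le_tsum i fun j _ => by positivity
    _ ≤ B * ‖v i‖ ^ 2 := hB
  exact le_of_mul_le_mul_right hsq hpos

lemma finite_setOf_eq_of_summable_inner {X : Type*} (Ψ : X → H) (t : ι → X) {s : X}
    (hs : Ψ s ≠ 0) (hsum : Summable fun j => ‖⟪Ψ s, Ψ (t j)⟫_𝕜‖ ^ 2) :
    {j | t j = s}.Finite := by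
  have hconst : Summable fun _ : {j | t j = s} => ‖⟪Ψ s, Ψ s⟫_𝕜‖ ^ 2 :=
    (hsum.subtype _).congr fun j => by rw [Function.comp_apply, j.2]
  exact finite_coe_iff.mp
    (.of_summable_const (pow_pos (norm_pos_iff.mpr (inner_self_ne_zero.mpr hs)) 2) hconst)

end InnerProduct

theorem stmt17_general {X : Type*} [MeasurableSpace X]
    (hsing : ∀ t : X, MeasurableSet ({t} : Set X))
    {H : Type*} [NormedAddCommGroup H] [InnerProductSpace ℂ H]
    (Ψ : X → H)
    {J : Type*} [Countable J] (t : J → X) (A B : ℝ) (hA : 0 < A) (hB : 0 < B)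
    (hframe : ∀ x : H,
      A * ‖x‖ ^ 2 ≤ ∑' j, ‖⟪x, Ψ (t j)⟫_ℂ‖ ^ 2 ∧
      ∑' j, ‖⟪x, Ψ (t j)⟫_ℂ‖ ^ 2 ≤ B * ‖x‖ ^ 2) :
    ∃ ν : Measure X, SigmaFinite ν ∧
      (∃ A' B' : ℝ, 0 < A' ∧ 0 < B' ∧ ∀ x : H,
        A' * ‖x‖ ^ 2 ≤ ∫ s, ‖⟪x, Ψ s⟫_ℂ‖ ^ 2 ∂ν ∧
        (∫ s, ‖⟪x, Ψ s⟫_ℂ‖ ^ 2 ∂ν) ≤ B' * ‖x‖ ^ 2) ∧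
      (∃ C : ℝ, 0 < C ∧ ∀ᵐ s ∂ν, ‖Ψ s‖ ≤ C) := by
  have : MeasurableSingletonClass X := ⟨hsing⟩
  have hsum (x : H) (hx : x ≠ 0) : Summable fun j => ‖⟪x, Ψ (t j)⟫_ℂ‖ ^ 2 :=
    summable_of_pos_le_tsum (by have := norm_pos_iff.mpr hx; positivity) (hframe x).1
  let J' := {j | Ψ (t j) ≠ 0}
  refine ⟨sum fun j : J' => dirac (t j), ?_, ⟨A, B, hA, hB, fun x => ?_⟩, ⟨√B, by positivity, ?_⟩⟩
  · refine sigmaFinite_sum_dirac fun s => ?_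
    by_cases hs : Ψ s = 0
    · convert finite_empty
      exact eq_empty_of_forall_notMem fun j (hj : t j = s) => j.2 (hj ▸ hs)
    · exact (finite_setOf_eq_of_summable_inner Ψ t hs (hsum _ hs)).preimage
        Subtype.val_injective.injOn
  · have hsupp : Function.support (fun j => ‖⟪x, Ψ (t j)⟫_ℂ‖ ^ 2) ⊆ J' := fun j hj hzero => by
      simp [hzero] at hj
    rw [integral_sum_dirac_of_nonneg _ fun _ => by positivity,
      tsum_subtype_eq_of_support_subset hsupp]
    exact hframe x
  · rw [ae_sum_dirac_iff]
    rintro ⟨j, hj⟩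
    exact (Real.le_sqrt (norm_nonneg _) hB.le).mpr
      (norm_sq_le_of_tsum_inner_le (v := fun j => Ψ (t j)) hj (hsum _ hj) (hframe _).2)

theorem stmt17 {X : Type*} [MeasurableSpace X]
    (hsing : ∀ t : X, MeasurableSet ({t} : Set X))
    {H : Type*} [NormedAddCommGroup H] [InnerProductSpace ℂ H] [CompleteSpace H]
    [TopologicalSpace.SeparableSpace H] [MeasurableSpace H] [BorelSpace H]
    (Ψ : X → H) (hmeas : Measurable Ψ)
    {J : Type*} [Countable J] (t : J → X) (A B : ℝ) (hA : 0 < A) (hB : 0 < B)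
    (hframe : ∀ x : H,
      A * ‖x‖ ^ 2 ≤ ∑' j, ‖⟪x, Ψ (t j)⟫_ℂ‖ ^ 2 ∧
      ∑' j, ‖⟪x, Ψ (t j)⟫_ℂ‖ ^ 2 ≤ B * ‖x‖ ^ 2) :
    ∃ ν : Measure X, SigmaFinite ν ∧
      (∃ A' B' : ℝ, 0 < A' ∧ 0 < B' ∧ ∀ x : H,
        A' * ‖x‖ ^ 2 ≤ ∫ s, ‖⟪x, Ψ s⟫_ℂ‖ ^ 2 ∂ν ∧
        (∫ s, ‖⟪x, Ψ s⟫_ℂ‖ ^ 2 ∂ν) ≤ B' * ‖x‖ ^ 2) ∧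
      (∃ C : ℝ, 0 < C ∧ ∀ᵐ s ∂ν, ‖Ψ s‖ ≤ C) :=
  stmt17_general hsing Ψ t A B hA hB hframe
end
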